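/- Assume v² − 4f²m_l² > 0 and M² < M₂². Set L := (v² − 4f²m_l²)·M₂² / (8f⁴·(M₂² − M²)) (so L > 0). Then the parity-breaking point P = (l = 0, l′ = √L, δ = 0, δ′ = −v/(4f²), δbar = 0, δbar′ = −f·M·L/M₂²) is a critical point of V₁ (all six partial derivatives of V₁ vanish at P), and the value of the potential there is V₁(P) = −f²·(1 − M²/M₂²)·L². -/

import Mathlib

/-- The simplified tree-level Higgs potential of the minimal SUSY left-right model in
the limit of small gauge and bidoublet couplings, with all fields real:
`V₁(l, l', δ, δ', δbar, δbar') = m_l²(l'² + l²) + M₂²(δbar'² + δbar²) + f²(l'⁴ + l⁴)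
 + 4f²(l'²δ'² + l²δ²) + h²l'²l² + 2v(l'²δ' + l²δ) + 2fM(l'²δbar' + l²δbar)`. -/
noncomputable def V1 (mlsq M2 f M v h : ℝ) (l l' δ δ' δbar δbar' : ℝ) : ℝ :=
  mlsq * (l' ^ 2 + l ^ 2) + M2 ^ 2 * (δbar' ^ 2 + δbar ^ 2) + f ^ 2 * (l' ^ 4 + l ^ 4)
  + 4 * f ^ 2 * (l' ^ 2 * δ' ^ 2 + l ^ 2 * δ ^ 2) + h ^ 2 * l' ^ 2 * l ^ 2
  + 2 * v * (l' ^ 2 * δ' + l ^ 2 * δ) + 2 * f * M * (l' ^ 2 * δbar' + l ^ 2 * δbar)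

/-! The unprimed partial derivatives vanish at `l = δbar = 0` because they carry a factor `l`
or `l²`; the choices of `δ'` and `δbar'` kill the `δ'` and `δbar'` derivatives. What is left of
the `l'` equation is `m_l² − v²/(4f²) + 2f²L(1 − M²/M₂²) = 0`, which is the definition of `L`,
and the same relation collapses `V₁(P)` to `−f²(1 − M²/M₂²)L²`. -/

section partialDerivatives

variable (mlsq M2 f M v h l l' δ δ' δbar δbar' : ℝ)

theorem V1_swap :
    V1 mlsq M2 f M v h l l' δ δ' δbar δbar' = V1 mlsq M2 f M v h l' l δ' δ δbar' δbar := by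
  unfold V1; ring

theorem deriv_V1_l' :
    deriv (fun x => V1 mlsq M2 f M v h l x δ δ' δbar δbar') l' =
      2 * l' * (mlsq + 2 * f ^ 2 * l' ^ 2 + 4 * f ^ 2 * δ' ^ 2 + h ^ 2 * l ^ 2 + 2 * v * δ'
        + 2 * f * M * δbar') := by
  unfold V1; simp (disch := fun_prop); ring

theorem deriv_V1_δ' :
    deriv (fun x => V1 mlsq M2 f M v h l l' δ x δbar δbar') δ' =
      2 * l' ^ 2 * (4 * f ^ 2 * δ' + v) := by
  unfold V1; simp (disch := fun_prop); ring

theorem deriv_V1_δbar' :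
    deriv (fun x => V1 mlsq M2 f M v h l l' δ δ' δbar x) δbar' =
      2 * (M2 ^ 2 * δbar' + f * M * l' ^ 2) := by
  unfold V1; simp (disch := fun_prop); ring

theorem deriv_V1_l :
    deriv (fun x => V1 mlsq M2 f M v h x l' δ δ' δbar δbar') l =
      2 * l * (mlsq + 2 * f ^ 2 * l ^ 2 + 4 * f ^ 2 * δ ^ 2 + h ^ 2 * l' ^ 2 + 2 * v * δ
        + 2 * f * M * δbar) := by
  simp only [V1_swap _ _ _ _ _ _ _ l']
  exact deriv_V1_l' ..

theorem deriv_V1_δ :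
    deriv (fun x => V1 mlsq M2 f M v h l l' x δ' δbar δbar') δ =
      2 * l ^ 2 * (4 * f ^ 2 * δ + v) := by
  simp only [V1_swap _ _ _ _ _ _ _ l']
  exact deriv_V1_δ' ..

theorem deriv_V1_δbar :
    deriv (fun x => V1 mlsq M2 f M v h l l' δ δ' x δbar') δbar =
      2 * (M2 ^ 2 * δbar + f * M * l ^ 2) := by
  simp only [V1_swap _ _ _ _ _ _ _ l']
  exact deriv_V1_δbar' ..

end partialDerivatives

/-- The parity-breaking solution: under `v² − 4f²m_l² > 0` and `M² < M₂²`, with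
`L = (v² − 4f²m_l²)M₂²/(8f⁴(M₂² − M²))`, the point
`(l, l', δ, δ', δbar, δbar') = (0, √L, 0, −v/(4f²), 0, −fML/M₂²)` is a critical point
of `V₁` and `V₁ = −f²(1 − M²/M₂²)L²` there. -/
theorem parity_breaking_solution (mlsq M2 f M v h L : ℝ)
    (hf : f ≠ 0) (hM2 : 0 < M2)
    (hpos : 0 < v ^ 2 - 4 * f ^ 2 * mlsq) (hMM : M ^ 2 < M2 ^ 2)
    (hL : L = (v ^ 2 - 4 * f ^ 2 * mlsq) * M2 ^ 2 / (8 * f ^ 4 * (M2 ^ 2 - M ^ 2))) :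
    0 < L ∧
    deriv (fun x => V1 mlsq M2 f M v h x (Real.sqrt L) 0 (-v / (4 * f ^ 2)) 0
      (-f * M * L / M2 ^ 2)) 0 = 0 ∧
    deriv (fun x => V1 mlsq M2 f M v h 0 x 0 (-v / (4 * f ^ 2)) 0
      (-f * M * L / M2 ^ 2)) (Real.sqrt L) = 0 ∧
    deriv (fun x => V1 mlsq M2 f M v h 0 (Real.sqrt L) x (-v / (4 * f ^ 2)) 0
      (-f * M * L / M2 ^ 2)) 0 = 0 ∧
    deriv (fun x => V1 mlsq M2 f M v h 0 (Real.sqrt L) 0 x 0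
      (-f * M * L / M2 ^ 2)) (-v / (4 * f ^ 2)) = 0 ∧
    deriv (fun x => V1 mlsq M2 f M v h 0 (Real.sqrt L) 0 (-v / (4 * f ^ 2)) x
      (-f * M * L / M2 ^ 2)) 0 = 0 ∧
    deriv (fun x => V1 mlsq M2 f M v h 0 (Real.sqrt L) 0 (-v / (4 * f ^ 2)) 0 x)
      (-f * M * L / M2 ^ 2) = 0 ∧
    V1 mlsq M2 f M v h 0 (Real.sqrt L) 0 (-v / (4 * f ^ 2)) 0 (-f * M * L / M2 ^ 2)
      = -f ^ 2 * (1 - M ^ 2 / M2 ^ 2) * L ^ 2 := by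
  have hden : 0 < M2 ^ 2 - M ^ 2 := by linarith
  have hLpos : 0 < L := by rw [hL]; positivity
  have hsq : Real.sqrt L ^ 2 = L := Real.sq_sqrt hLpos.le
  have hLeq : mlsq - v ^ 2 / (4 * f ^ 2) + 2 * f ^ 2 * L * (1 - M ^ 2 / M2 ^ 2) = 0 := by
    rw [hL]; field_simp; ring
  refine ⟨hLpos, ?_, ?_, ?_, ?_, ?_, ?_, ?_⟩
  · rw [deriv_V1_l]; ring
  · rw [deriv_V1_l', hsq]
    linear_combination (norm := skip) (2 * Real.sqrt L) * hLeq
    field_simp; ring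
  · rw [deriv_V1_δ]; ring
  · rw [deriv_V1_δ']; field_simp; ring
  · rw [deriv_V1_δbar]; ring
  · rw [deriv_V1_δbar', hsq]; field_simp; ring
  · have h4 : Real.sqrt L ^ 4 = L ^ 2 := by
      rw [show Real.sqrt L ^ 4 = (Real.sqrt L ^ 2) ^ 2 by ring, hsq]
    unfold V1; rw [hsq, h4]
    linear_combination (norm := skip) L * hLeq
    field_simp; ring
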